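/- arXiv:2307.12077 — 3 statements merged into one kernel-verified Lean document; each statement's English description precedes it below -/
import Mathlib

section
/- Let 𝒫₀ be a nonempty convex set of Borel probability measures on ℝ that is compact in the topology of weak convergence and satisfies sup_{Q∈𝒫₀} ∫ x² dQ(x) < ∞. Set μ̄ = sup_{Q∈𝒫₀} ∫ x dQ(x) and μ̲ = inf_{Q∈𝒫₀} ∫ x dQ(x). Then the upper variance V̄ := inf_{μ∈[μ̲,μ̄]} sup_{Q∈𝒫₀} ∫ (x−μ)² dQ(x) satisfies V̄ = sup_{Q∈𝒫₀} Var_Q, where Var_Q = ∫ x² dQ − (∫ x dQ)² is the classical variance of the identity under Q; moreover the infimum over μ ∈ [μ̲,μ̄] is attained. -/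
open MeasureTheory ProbabilityTheory Filter
open scoped ENNReal NNReal

/-!
For every `μ`, `∫ (x - μ)² dQ = Var_Q + (E_Q - μ)²`, so `V̄ ≥ sup Var_Q` is immediate and the
work is the reverse inequality. Mixing is where convexity enters:
`Var(tQ₁ + (1-t)Q₀) = t Var_{Q₁} + (1-t) Var_{Q₀} + t(1-t)(E_{Q₁} - E_{Q₀})²`. If `Q₀` has
variance within `δ` of the supremum `V`, comparing the mixture with `V` gives, for every `Q₁`,
`Var_{Q₁} + (E_{Q₁} - E_{Q₀})² ≤ V + δ/t + t (E_{Q₁} - E_{Q₀})²`, which is `≤ V + ε` for suitable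
`t` and `δ` because the means are bounded. Hence the centring point `μ = E_{Q₀}` brings
`sup_Q ∫ (x - μ)² dQ` within `ε` of `V`. The function `μ ↦ sup_Q ∫ (x - μ)² dQ` is a supremum of
continuous functions, hence lower semicontinuous, and attains its minimum on the compact interval
`[μ̲, μ̄]`, which contains every `E_{Q₀}`.
-/

open Set

section Mixture

variable {α : Type*} [MeasurableSpace α] {P Q : Measure α} {c : ℝ≥0∞}

lemma isProbabilityMeasure_mixture [IsProbabilityMeasure P] [IsProbabilityMeasure Q]
    (hc : c ≤ 1) : IsProbabilityMeasure (c • P + (1 - c) • Q) :=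
  ⟨by simp [add_tsub_cancel_of_le hc]⟩

lemma integrable_mixture {f : α → ℝ} (hP : Integrable f P) (hQ : Integrable f Q) (hc : c ≤ 1) :
    Integrable f (c • P + (1 - c) • Q) :=
  (hP.smul_measure (ne_top_of_le_ne_top ENNReal.one_ne_top hc)).add_measure
    (hQ.smul_measure (ENNReal.sub_ne_top ENNReal.one_ne_top))

lemma integral_mixture {f : α → ℝ} (hP : Integrable f P) (hQ : Integrable f Q) (hc : c ≤ 1) :
    ∫ x, f x ∂(c • P + (1 - c) • Q) =
      c.toReal * ∫ x, f x ∂P + (1 - c.toReal) * ∫ x, f x ∂Q := by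
  rw [integral_add_measure (hP.smul_measure (ne_top_of_le_ne_top ENNReal.one_ne_top hc))
      (hQ.smul_measure (ENNReal.sub_ne_top ENNReal.one_ne_top)),
    integral_smul_measure, integral_smul_measure, ENNReal.toReal_sub_of_le hc ENNReal.one_ne_top,
    ENNReal.toReal_one, smul_eq_mul, smul_eq_mul]

lemma exists_mem_coe_eq_mixture {𝒫₀ : Set (ProbabilityMeasure α)}
    (hconv : ∀ P ∈ 𝒫₀, ∀ Q ∈ 𝒫₀, ∀ R : ProbabilityMeasure α, ∀ c : ℝ≥0∞, c ≤ 1 →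
      (R : Measure α) = c • (P : Measure α) + (1 - c) • (Q : Measure α) → R ∈ 𝒫₀)
    {P Q : ProbabilityMeasure α} (hP : P ∈ 𝒫₀) (hQ : Q ∈ 𝒫₀) (hc : c ≤ 1) :
    ∃ R ∈ 𝒫₀, (R : Measure α) = c • (P : Measure α) + (1 - c) • (Q : Measure α) :=
  have := isProbabilityMeasure_mixture (P := (P : Measure α)) (Q := (Q : Measure α)) hc
  ⟨⟨_, this⟩, hconv P hP Q hQ _ c hc rfl, rfl⟩

end Mixture

section SecondMoment

variable {P Q : Measure ℝ}

lemma memLp_id_two_iff_integrable_sq : MemLp id 2 P ↔ Integrable (fun x : ℝ ↦ x ^ 2) P :=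
  memLp_two_iff_integrable_sq aestronglyMeasurable_id

lemma memLp_id_two_of_lintegral_sq_le {M : ℝ}
    (h : ∫⁻ x, ENNReal.ofReal (x ^ 2) ∂P ≤ ENNReal.ofReal M) : MemLp id 2 P := by
  refine memLp_id_two_iff_integrable_sq.2 ⟨by fun_prop, ?_⟩
  rw [hasFiniteIntegral_iff_ofReal (Eventually.of_forall fun x ↦ sq_nonneg x)]
  exact h.trans_lt ENNReal.ofReal_lt_top

lemma integral_sq_le_of_lintegral_sq_le {M : ℝ}
    (h : ∫⁻ x, ENNReal.ofReal (x ^ 2) ∂P ≤ ENNReal.ofReal M) : ∫ x, x ^ 2 ∂P ≤ max M 0 := by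
  rw [integral_eq_lintegral_of_nonneg_ae (Eventually.of_forall fun x ↦ sq_nonneg x)
    (by fun_prop), ← ENNReal.toReal_ofReal']
  exact ENNReal.toReal_mono ENNReal.ofReal_ne_top h

variable [IsProbabilityMeasure P] [IsProbabilityMeasure Q]

lemma variance_id_eq (hP : MemLp id 2 P) :
    variance id P = ∫ x, x ^ 2 ∂P - (∫ x, x ∂P) ^ 2 := by
  simp [variance_eq_sub hP]

lemma sq_integral_id_le (hP : MemLp id 2 P) : (∫ x, x ∂P) ^ 2 ≤ ∫ x, x ^ 2 ∂P := by
  linarith [variance_nonneg id P, variance_id_eq hP]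

lemma variance_id_le_integral_sq : variance id P ≤ ∫ x, x ^ 2 ∂P := by
  simpa using variance_le_expectation_sq (μ := P) aestronglyMeasurable_id

lemma integral_sub_sq_eq_variance_add (hP : MemLp id 2 P) (μ : ℝ) :
    ∫ x, (x - μ) ^ 2 ∂P = variance id P + (∫ x, x ∂P - μ) ^ 2 := by
  have hshift : variance (fun x : ℝ ↦ x - μ) P = variance id P :=
    variance_sub_const aestronglyMeasurable_id μ
  have hmean : ∫ x, (x - μ) ∂P = ∫ x, x ∂P - μ := by
    rw [integral_sub (f := fun x ↦ x) (hP.integrable one_le_two) (integrable_const μ),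
      integral_const, probReal_univ, one_smul]
  have h := variance_eq_sub (X := fun x : ℝ ↦ x - μ) (hP.sub (memLp_const μ))
  rw [hshift, hmean] at h
  simp only [Pi.pow_apply] at h
  linarith

lemma variance_id_mixture (hP : MemLp id 2 P) (hQ : MemLp id 2 Q) {c : ℝ≥0∞} (hc : c ≤ 1) :
    variance id (c • P + (1 - c) • Q) =
      c.toReal * variance id P + (1 - c.toReal) * variance id Q
        + c.toReal * (1 - c.toReal) * (∫ x, x ∂P - ∫ x, x ∂Q) ^ 2 := by
  have := isProbabilityMeasure_mixture (P := P) (Q := Q) hc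
  have hP₂ := memLp_id_two_iff_integrable_sq.1 hP
  have hQ₂ := memLp_id_two_iff_integrable_sq.1 hQ
  have hmean := integral_mixture (hP.integrable one_le_two) (hQ.integrable one_le_two) hc
  simp only [id] at hmean
  rw [variance_id_eq (memLp_id_two_iff_integrable_sq.2 (integrable_mixture hP₂ hQ₂ hc)),
    variance_id_eq hP, variance_id_eq hQ, integral_mixture hP₂ hQ₂ hc, hmean]
  ring

end SecondMoment

lemma add_le_of_mixture_le {V δ t a b d : ℝ} (ht₀ : 0 < t) (ht₁ : t ≤ 1) (hδ : 0 ≤ δ)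
    (hb : V - δ ≤ b) (hmix : t * a + (1 - t) * b + t * (1 - t) * d ≤ V) :
    a + d ≤ V + δ / t + t * d := by
  have key : t * (a + (1 - t) * d) ≤ t * (V + δ / t) := by
    rw [mul_add t V, mul_div_cancel₀ δ ht₀.ne']
    nlinarith
  nlinarith [le_of_mul_le_mul_left key ht₀]

section MeanVarianceFamily

/-! Here `m i` and `v i` play the roles of the mean and the variance of the `i`-th measure. -/

variable {ι : Type*} {m v : ι → ℝ} {B : ℝ}

lemma bddAbove_range_add_sub_sq (hm : ∀ i, |m i| ≤ B) (hv : BddAbove (range v)) (μ : ℝ) :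
    BddAbove (range fun i ↦ v i + (m i - μ) ^ 2) := by
  obtain ⟨C, hC⟩ := hv
  refine ⟨C + (B + |μ|) ^ 2, forall_mem_range.2 fun i ↦ add_le_add (hC (mem_range_self i)) ?_⟩
  rw [← sq_abs]
  gcongr
  exact (abs_sub _ _).trans (by gcongr; exact hm i)

lemma ciSup_le_ciSup_add_sub_sq (hm : ∀ i, |m i| ≤ B) (hv : BddAbove (range v)) (μ : ℝ) :
    ⨆ i, v i ≤ ⨆ i, v i + (m i - μ) ^ 2 := by
  cases isEmpty_or_nonempty ι
  · simp
  exact ciSup_mono (bddAbove_range_add_sub_sq hm hv μ) fun i ↦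
    le_add_of_nonneg_right (sq_nonneg _)

variable [Nonempty ι]

theorem exists_forall_add_sub_sq_le (hm : ∀ i, |m i| ≤ B) (hv : BddAbove (range v))
    (hmix : ∀ i j, ∀ t ∈ Icc (0 : ℝ) 1, ∃ k,
      t * v i + (1 - t) * v j + t * (1 - t) * (m i - m j) ^ 2 ≤ v k)
    {ε : ℝ} (hε : 0 < ε) : ∃ j, ∀ i, v i + (m i - m j) ^ 2 ≤ (⨆ i, v i) + ε := by
  -- `t` makes `t (m i - m j)² ≤ ε / 2`, and `δ = t ε / 2` makes `δ / t = ε / 2`.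
  set t := ε / (2 * (4 * B ^ 2 + ε))
  have ht₀ : 0 < t := by positivity
  have ht₁ : t ≤ 1 := by
    rw [div_le_one (by positivity)]
    nlinarith [sq_nonneg B]
  have htB : t * (4 * B ^ 2) ≤ ε / 2 := by
    rw [div_mul_eq_mul_div, div_le_div_iff₀ (by positivity) two_pos]
    nlinarith
  obtain ⟨j, hj⟩ := exists_lt_of_lt_ciSup (show (⨆ i, v i) - t * ε / 2 < ⨆ i, v i by
    have : 0 < t * ε / 2 := by positivity
    linarith)
  refine ⟨j, fun i ↦ ?_⟩
  obtain ⟨k, hk⟩ := hmix i j t ⟨ht₀.le, ht₁⟩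
  have hd : (m i - m j) ^ 2 ≤ 4 * B ^ 2 := by
    have : |m i - m j| ≤ 2 * B := (abs_sub _ _).trans (by linarith [hm i, hm j])
    rw [← sq_abs]
    nlinarith [abs_nonneg (m i - m j)]
  have h := add_le_of_mixture_le ht₀ ht₁ (by positivity) hj.le (hk.trans (le_ciSup hv k))
  rw [mul_div_assoc, mul_div_cancel_left₀ _ ht₀.ne'] at h
  nlinarith

theorem exists_mem_Icc_ciSup_add_sub_sq_eq (hm : ∀ i, |m i| ≤ B) (hv : BddAbove (range v))
    (hmix : ∀ i j, ∀ t ∈ Icc (0 : ℝ) 1, ∃ k,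
      t * v i + (1 - t) * v j + t * (1 - t) * (m i - m j) ^ 2 ≤ v k) :
    ∃ μ ∈ Icc (⨅ i, m i) (⨆ i, m i), ⨆ i, v i + (m i - μ) ^ 2 = ⨆ i, v i := by
  have hm_above : BddAbove (range m) := ⟨B, forall_mem_range.2 fun i ↦ le_of_abs_le (hm i)⟩
  have hm_below : BddBelow (range m) :=
    ⟨-B, forall_mem_range.2 fun i ↦ neg_le_of_abs_le (hm i)⟩
  have hlsc : LowerSemicontinuous fun μ ↦ ⨆ i, v i + (m i - μ) ^ 2 :=
    lowerSemicontinuous_ciSup (bddAbove_range_add_sub_sq hm hv) fun i ↦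
      (continuous_const.add ((continuous_const.sub continuous_id).pow 2)).lowerSemicontinuous
  obtain ⟨μ, hμ, hmin⟩ := LowerSemicontinuousOn.exists_isMinOn
    (nonempty_Icc.2 (ciInf_le_ciSup hm_below hm_above)) isCompact_Icc
    (hlsc.lowerSemicontinuousOn _)
  refine ⟨μ, hμ, le_antisymm (le_of_forall_pos_le_add fun ε hε ↦ ?_)
    (ciSup_le_ciSup_add_sub_sq hm hv μ)⟩
  obtain ⟨j, hj⟩ := exists_forall_add_sub_sq_le hm hv hmix hε
  calc ⨆ i, v i + (m i - μ) ^ 2 ≤ ⨆ i, v i + (m i - m j) ^ 2 :=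
        isMinOn_iff.1 hmin _ ⟨ciInf_le hm_below j, le_ciSup hm_above j⟩
    _ ≤ (⨆ i, v i) + ε := ciSup_le hj

end MeanVarianceFamily

theorem upper_variance_eq_sup_variance_general
    (𝒫₀ : Set (ProbabilityMeasure ℝ)) (hne : 𝒫₀.Nonempty)
    (hconv : ∀ P ∈ 𝒫₀, ∀ Q ∈ 𝒫₀, ∀ R : ProbabilityMeasure ℝ, ∀ c : ℝ≥0∞, c ≤ 1 →
      (R : Measure ℝ) = c • (P : Measure ℝ) + (1 - c) • (Q : Measure ℝ) → R ∈ 𝒫₀)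
    (hmom : ∃ M : ℝ, ∀ Q ∈ 𝒫₀, ∫⁻ x, ENNReal.ofReal (x ^ 2) ∂(Q : Measure ℝ) ≤
      ENNReal.ofReal M) :
    ∃ μ ∈ Set.Icc (⨅ Q : 𝒫₀, ∫ x, x ∂(Q : Measure ℝ)) (⨆ Q : 𝒫₀, ∫ x, x ∂(Q : Measure ℝ)),
      (⨆ Q : 𝒫₀, ∫ x, (x - μ) ^ 2 ∂(Q : Measure ℝ))
          = (⨆ Q : 𝒫₀, variance id (Q : Measure ℝ)) ∧
      ∀ μ' ∈ Set.Icc (⨅ Q : 𝒫₀, ∫ x, x ∂(Q : Measure ℝ)) (⨆ Q : 𝒫₀, ∫ x, x ∂(Q : Measure ℝ)),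
        (⨆ Q : 𝒫₀, variance id (Q : Measure ℝ)) ≤ ⨆ Q : 𝒫₀, ∫ x, (x - μ') ^ 2 ∂(Q : Measure ℝ) := by
  have := hne.to_subtype
  obtain ⟨M, hM⟩ := hmom
  have hL2 (Q : 𝒫₀) : MemLp id 2 (Q : Measure ℝ) := memLp_id_two_of_lintegral_sq_le (hM Q Q.2)
  have hsq (Q : 𝒫₀) : ∫ x, x ^ 2 ∂(Q : Measure ℝ) ≤ max M 0 :=
    integral_sq_le_of_lintegral_sq_le (hM Q Q.2)
  have hmean (Q : 𝒫₀) : |∫ x, x ∂(Q : Measure ℝ)| ≤ √(max M 0) :=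
    Real.abs_le_sqrt ((sq_integral_id_le (hL2 Q)).trans (hsq Q))
  have hvar : BddAbove (range fun Q : 𝒫₀ ↦ variance id (Q : Measure ℝ)) :=
    ⟨max M 0, forall_mem_range.2 fun Q ↦ variance_id_le_integral_sq.trans (hsq Q)⟩
  have hmix (P Q : 𝒫₀) (t : ℝ) (ht : t ∈ Icc (0 : ℝ) 1) : ∃ R : 𝒫₀,
      t * variance id (P : Measure ℝ) + (1 - t) * variance id (Q : Measure ℝ)
        + t * (1 - t) * (∫ x, x ∂(P : Measure ℝ) - ∫ x, x ∂(Q : Measure ℝ)) ^ 2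
        ≤ variance id (R : Measure ℝ) := by
    have hc : ENNReal.ofReal t ≤ 1 := ENNReal.ofReal_le_one.2 ht.2
    obtain ⟨R, hR, hReq⟩ := exists_mem_coe_eq_mixture hconv P.2 Q.2 hc
    refine ⟨⟨R, hR⟩, le_of_eq ?_⟩
    rw [hReq, variance_id_mixture (hL2 P) (hL2 Q) hc, ENNReal.toReal_ofReal ht.1]
  have hsecond (μ : ℝ) : (fun Q : 𝒫₀ ↦ ∫ x, (x - μ) ^ 2 ∂(Q : Measure ℝ)) = fun Q : 𝒫₀ ↦
      variance id (Q : Measure ℝ) + (∫ x, x ∂(Q : Measure ℝ) - μ) ^ 2 :=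
    funext fun Q ↦ integral_sub_sq_eq_variance_add (hL2 Q) μ
  obtain ⟨μ, hμ, heq⟩ := exists_mem_Icc_ciSup_add_sub_sq_eq hmean hvar hmix
  refine ⟨μ, hμ, by rw [hsecond]; exact heq, fun μ' _ ↦ ?_⟩
  rw [hsecond]
  exact ciSup_le_ciSup_add_sub_sq hmean hvar μ'

/-- For a nonempty convex weakly compact set `𝒫₀` of Borel probability
measures on `ℝ` with uniformly bounded second moments, the upper variance
`V̄ = inf_{μ ∈ [μ̲, μ̄]} sup_{Q ∈ 𝒫₀} ∫ (x − μ)² dQ` equals `sup_{Q ∈ 𝒫₀} Var_Q`, and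
the infimum over `μ ∈ [μ̲, μ̄]` is attained. -/
theorem upper_variance_eq_sup_variance
    (𝒫₀ : Set (ProbabilityMeasure ℝ)) (hne : 𝒫₀.Nonempty)
    (hconv : ∀ P ∈ 𝒫₀, ∀ Q ∈ 𝒫₀, ∀ R : ProbabilityMeasure ℝ, ∀ c : ℝ≥0∞, c ≤ 1 →
      (R : Measure ℝ) = c • (P : Measure ℝ) + (1 - c) • (Q : Measure ℝ) → R ∈ 𝒫₀)
    (hcpt : IsCompact 𝒫₀)
    (hmom : ∃ M : ℝ, ∀ Q ∈ 𝒫₀, ∫⁻ x, ENNReal.ofReal (x ^ 2) ∂(Q : Measure ℝ) ≤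
      ENNReal.ofReal M) :
    ∃ μ ∈ Set.Icc (⨅ Q : 𝒫₀, ∫ x, x ∂(Q : Measure ℝ)) (⨆ Q : 𝒫₀, ∫ x, x ∂(Q : Measure ℝ)),
      (⨆ Q : 𝒫₀, ∫ x, (x - μ) ^ 2 ∂(Q : Measure ℝ))
          = (⨆ Q : 𝒫₀, variance id (Q : Measure ℝ)) ∧
      ∀ μ' ∈ Set.Icc (⨅ Q : 𝒫₀, ∫ x, x ∂(Q : Measure ℝ)) (⨆ Q : 𝒫₀, ∫ x, x ∂(Q : Measure ℝ)),
        (⨆ Q : 𝒫₀, variance id (Q : Measure ℝ)) ≤ ⨆ Q : 𝒫₀, ∫ x, (x - μ') ^ 2 ∂(Q : Measure ℝ) :=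
  upper_variance_eq_sup_variance_general 𝒫₀ hne hconv hmom
end

section
/- Let 𝒫₀ be a nonempty set of Borel probability measures on ℝ with sup_{Q∈𝒫₀} ∫ |x| dQ(x) < ∞, and let 𝒫 be the kernel-generated set over 𝒫₀ on the canonical space (ℝ^ℕ, ℬ(ℝ^ℕ)). Set μ̄ = sup_{Q∈𝒫₀} ∫ x dQ(x) and μ̲ = inf_{Q∈𝒫₀} ∫ x dQ(x). Then for every P ∈ 𝒫 and every i ≥ 1, μ̲ ≤ E_P[Xᵢ | ℱ_{i−1}] ≤ μ̄ P-almost surely. -/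
open MeasureTheory ProbabilityTheory Filter
open scoped ENNReal NNReal

noncomputable section

/-- The set of finite-dimensional laws on `Fin n → ℝ` built from an initial law and
probability kernels whose values lie in the prescribed sets `𝒫seq i` (the set of
possible conditional laws for the `i`-th coordinate, `0`-indexed). -/
def admissibleLaws (𝒫seq : ℕ → Set (Measure ℝ)) : (n : ℕ) → Set (Measure (Fin n → ℝ))
  | 0 => {Measure.dirac (fun i => i.elim0)}
  | n + 1 =>
    { ν | ∃ μ ∈ admissibleLaws 𝒫seq n, ∃ κ : Kernel (Fin n → ℝ) ℝ,
        IsMarkovKernel κ ∧ (∀ x, κ x ∈ 𝒫seq n) ∧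
        ν = (μ.compProd κ).map (fun p => Fin.snoc p.1 p.2) }

/-- The kernel-generated set of probability measures on the canonical space `ℝ^ℕ`:
all probability measures whose finite-dimensional marginals are obtained by iterated
integration of probability kernels taking values in `𝒫seq i`. -/
def kernelSet (𝒫seq : ℕ → Set (Measure ℝ)) : Set (Measure (ℕ → ℝ)) :=
  { P | IsProbabilityMeasure P ∧
      ∀ n : ℕ, P.map (fun ω (i : Fin n) => ω i) ∈ admissibleLaws 𝒫seq n }

/-- Canonical filtration on `ℝ^ℕ`: `canFilt i` is the σ-algebra generated by the
first `i` coordinates `X₀, …, X_{i−1}`. -/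
def canFilt (i : ℕ) : MeasurableSpace (ℕ → ℝ) :=
  MeasurableSpace.comap (fun ω (j : Fin i) => ω j) inferInstance

end

/-! The `(i+1)`-dimensional marginal of `P` is `μ ⊗ₘ κ` with `μ` the law of `(X₀, …, X_{i-1})`
and `κ` a kernel with values in `𝒫₀`, so `κ` is a version of the conditional law of `Xᵢ` given
`ℱ_{i-1}`. Hence `E_P[Xᵢ | ℱ_{i-1}] = ∫ x κ(X₀, …, X_{i-1}, dx)` a.s., the mean of a member of
`𝒫₀`; the uniform moment bound makes `Xᵢ` integrable and the means bounded. -/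
section Disintegration

variable {Ω E F : Type*} [MeasurableSpace Ω] [MeasurableSpace E]
  [NormedAddCommGroup F] [MeasurableSpace F] [BorelSpace F] [SecondCountableTopology F]

lemma integrable_snd_compProd_of_lintegral_enorm_le {μ : Measure E} [IsFiniteMeasure μ]
    {κ : Kernel E F} [IsSFiniteKernel κ] {C : ℝ≥0∞} (hC : C ≠ ∞)
    (hκ : ∀ y, ∫⁻ x, ‖x‖ₑ ∂κ y ≤ C) : Integrable Prod.snd (μ ⊗ₘ κ) := by
  refine ⟨measurable_snd.aestronglyMeasurable, ?_⟩
  calc ∫⁻ p, ‖p.2‖ₑ ∂(μ ⊗ₘ κ) = ∫⁻ y, ∫⁻ x, ‖x‖ₑ ∂κ y ∂μ :=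
        Measure.lintegral_compProd measurable_snd.enorm
    _ ≤ ∫⁻ _, C ∂μ := lintegral_mono hκ
    _ < ∞ := by simpa using ENNReal.mul_lt_top hC.lt_top (measure_lt_top μ Set.univ)

variable [NormedSpace ℝ F] [CompleteSpace F]

theorem condExp_comap_ae_eq_integral_of_map_eq_compProd {P : Measure Ω} [IsFiniteMeasure P]
    {π : Ω → E} {X : Ω → F} (hπ : Measurable π) (hX : Integrable X P)
    {κ : Kernel E F} [IsFiniteKernel κ] (h : P.map (fun ω => (π ω, X ω)) = P.map π ⊗ₘ κ) :
    P[X | MeasurableSpace.comap π inferInstance] =ᵐ[P] fun ω => ∫ x, x ∂κ (π ω) := by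
  have hκ : condDistrib X π P =ᵐ[P.map π] κ :=
    condDistrib_ae_eq_of_measure_eq_compProd π hX.aemeasurable h
  filter_upwards [condExp_ae_eq_integral_condDistrib' hπ hX, ae_of_ae_map hπ.aemeasurable hκ]
    with ω hω hκω
  rw [hω, hκω]

end Disintegration

lemma measurable_finSnoc (n : ℕ) :
    Measurable fun p : (Fin n → ℝ) × ℝ => (Fin.snoc p.1 p.2 : Fin (n + 1) → ℝ) :=
  (continuous_fst.finSnoc continuous_snd).measurable

lemma measurable_finUnsnoc (n : ℕ) :
    Measurable fun z : Fin (n + 1) → ℝ => ((Fin.init z : Fin n → ℝ), z (Fin.last n)) :=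
  ((continuous_pi fun _ => continuous_apply _).prodMk (continuous_apply _)).measurable

lemma measurable_restrictFin (n : ℕ) : Measurable fun (ω : ℕ → ℝ) (j : Fin n) => ω j :=
  measurable_pi_lambda _ fun _ => measurable_pi_apply _

lemma isProbabilityMeasure_of_mem_admissibleLaws {𝒫seq : ℕ → Set (Measure ℝ)} :
    ∀ {n : ℕ} {ν : Measure (Fin n → ℝ)}, ν ∈ admissibleLaws 𝒫seq n → IsProbabilityMeasure ν
  | 0, _, rfl => inferInstance
  | n + 1, _, ⟨μ, hμ, κ, hκ, _, hν⟩ => by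
    have := isProbabilityMeasure_of_mem_admissibleLaws hμ
    rw [hν]
    exact Measure.isProbabilityMeasure_map (measurable_finSnoc n).aemeasurable

theorem exists_kernel_map_eq_compProd_of_mem_kernelSet {𝒫seq : ℕ → Set (Measure ℝ)}
    {P : Measure (ℕ → ℝ)} (hP : P ∈ kernelSet 𝒫seq) (i : ℕ) :
    ∃ κ : Kernel (Fin i → ℝ) ℝ, IsMarkovKernel κ ∧ (∀ x, κ x ∈ 𝒫seq i) ∧
      P.map (fun ω => ((fun j : Fin i => ω j), ω i)) =
        P.map (fun ω (j : Fin i) => ω j) ⊗ₘ κ := by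
  obtain ⟨μ, hμ, κ, hκ, hκ𝒫, hμκ⟩ := hP.2 (i + 1)
  have := isProbabilityMeasure_of_mem_admissibleLaws hμ
  have hjoint : P.map (fun ω => ((fun j : Fin i => ω j), ω i)) = μ ⊗ₘ κ := by
    have hunsnoc : (fun ω : ℕ → ℝ => ((fun j : Fin i => ω j), ω i)) =
        (fun z : Fin (i + 1) → ℝ => ((Fin.init z : Fin i → ℝ), z (Fin.last i))) ∘
          fun ω (j : Fin (i + 1)) => ω j := rfl
    rw [hunsnoc, ← Measure.map_map (measurable_finUnsnoc i) (measurable_restrictFin _), hμκ,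
      Measure.map_map (measurable_finUnsnoc i) (measurable_finSnoc i)]
    simp [Function.comp_def, Fin.init_snoc]
  refine ⟨κ, hκ, hκ𝒫, ?_⟩
  have hmarginal : P.map (fun ω (j : Fin i) => ω j) = μ := by
    rw [← Measure.fst_compProd (μ := μ) (κ := κ), ← hjoint, Measure.fst,
      Measure.map_map measurable_fst ((measurable_restrictFin i).prodMk (measurable_pi_apply i))]
    rfl
  rw [hjoint, hmarginal]

lemma integral_id_mem_Icc_iInf_iSup {S : Set (Measure ℝ)} {M : ℝ}
    (hM : ∀ Q ∈ S, ∫⁻ x, ‖x‖ₑ ∂Q ≤ ENNReal.ofReal M) {Q : Measure ℝ} (hQ : Q ∈ S) :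
    ∫ x, x ∂Q ∈ Set.Icc (⨅ Q : S, ∫ x, x ∂(Q : Measure ℝ)) (⨆ Q : S, ∫ x, x ∂(Q : Measure ℝ)) := by
  have hbound : ∀ Q : S, |∫ x, x ∂(Q : Measure ℝ)| ≤ (ENNReal.ofReal M).toReal := fun Q =>
    (norm_integral_le_lintegral_norm (μ := (Q : Measure ℝ)) fun x => x).trans <|
    ENNReal.toReal_mono ENNReal.ofReal_ne_top <| by simpa only [ofReal_norm] using hM Q Q.2
  exact ⟨ciInf_le ⟨_, Set.forall_mem_range.2 fun Q => (abs_le.1 (hbound Q)).1⟩ ⟨Q, hQ⟩,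
    le_ciSup ⟨_, Set.forall_mem_range.2 fun Q => (abs_le.1 (hbound Q)).2⟩ ⟨Q, hQ⟩⟩

theorem conditional_mean_bounds_general
    (𝒫₀ : Set (Measure ℝ))
    (hmom : ∃ M : ℝ, ∀ Q ∈ 𝒫₀, ∫⁻ x, ENNReal.ofReal |x| ∂Q ≤ ENNReal.ofReal M)
    (P : Measure (ℕ → ℝ)) (hP : P ∈ kernelSet fun _ => 𝒫₀) (i : ℕ) :
    ∀ᵐ ω ∂P,
      (⨅ Q : 𝒫₀, ∫ x, x ∂(Q : Measure ℝ)) ≤ (P[fun ω' => ω' i | canFilt i]) ω ∧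
      (P[fun ω' => ω' i | canFilt i]) ω ≤ ⨆ Q : 𝒫₀, ∫ x, x ∂(Q : Measure ℝ) := by
  obtain ⟨M, hM⟩ := hmom
  simp_rw [← Real.enorm_eq_ofReal_abs] at hM
  have := hP.1
  obtain ⟨κ, hκ, hκ𝒫, hmap⟩ := exists_kernel_map_eq_compProd_of_mem_kernelSet hP i
  have hXi : Integrable (fun ω : ℕ → ℝ => ω i) P := by
    have hsnd := integrable_snd_compProd_of_lintegral_enorm_le
      (μ := P.map fun ω (j : Fin i) => ω j) ENNReal.ofReal_ne_top fun y => hM _ (hκ𝒫 y)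
    rw [← hmap] at hsnd
    exact hsnd.comp_measurable ((measurable_restrictFin i).prodMk (measurable_pi_apply i))
  filter_upwards [condExp_comap_ae_eq_integral_of_map_eq_compProd
    (measurable_restrictFin i) hXi hmap] with ω hω
  rw [canFilt, hω]
  exact integral_id_mem_Icc_iInf_iSup hM (hκ𝒫 _)

/-- For a kernel-generated set `𝒫` over `𝒫₀` (uniformly bounded first
moments), for every `P ∈ 𝒫` and every coordinate `Xᵢ`, the conditional mean
`E_P[Xᵢ | ℱ_{i−1}]` lies `P`-a.s. between `μ̲ = inf_{Q∈𝒫₀} ∫ x dQ` and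
`μ̄ = sup_{Q∈𝒫₀} ∫ x dQ`. -/
theorem conditional_mean_bounds
    (𝒫₀ : Set (Measure ℝ)) (hne : 𝒫₀.Nonempty)
    (hprob : ∀ Q ∈ 𝒫₀, IsProbabilityMeasure Q)
    (hmom : ∃ M : ℝ, ∀ Q ∈ 𝒫₀, ∫⁻ x, ENNReal.ofReal |x| ∂Q ≤ ENNReal.ofReal M)
    (P : Measure (ℕ → ℝ)) (hP : P ∈ kernelSet fun _ => 𝒫₀) (i : ℕ) :
    ∀ᵐ ω ∂P,
      (⨅ Q : 𝒫₀, ∫ x, x ∂(Q : Measure ℝ)) ≤ (P[fun ω' => ω' i | canFilt i]) ω ∧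
      (P[fun ω' => ω' i | canFilt i]) ω ≤ ⨆ Q : 𝒫₀, ∫ x, x ∂(Q : Measure ℝ) :=
  conditional_mean_bounds_general 𝒫₀ hmom P hP i
end

section
/- Let W^L and W^R be bounded random variables on a probability space (Ω₀, 𝒜, P), with means μ_L = E[W^L], μ_R = E[W^R] and variances σ_L² = Var(W^L), σ_R² = Var(W^R). Define 𝒫₀ to be the set of all Borel probability measures ν on ℝ such that ∫ φ dν ≤ max(E[φ(W^L)], E[φ(W^R)]) for every Lipschitz function φ : ℝ → ℝ. Then: (1) sup_{ν∈𝒫₀} ∫ x dν = μ_L ∨ μ_R and inf_{ν∈𝒫₀} ∫ x dν = μ_L ∧ μ_R; (2) inf_{ν∈𝒫₀} Var_ν = σ_L² ∧ σ_R²; (3) if μ_L = μ_R then sup_{ν∈𝒫₀} Var_ν = σ_L² ∨ σ_R²; (4) if μ_L ≠ μ_R and |σ_L² − σ_R²| ≤ (μ_L − μ_R)², then sup_{ν∈𝒫₀} Var_ν = (1/4)[(μ_L−μ_R)² + ((σ_L²−σ_R²)/(μ_L−μ_R))²] + (σ_L²+σ_R²)/2. -/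
/-!
Every law `ν ∈ 𝒫₀` is carried by a compact interval `s` containing the ranges of `W^L` and `W^R`
(test `ν` against the truncated distance to `s`). On `s` the functions `x ↦ (x - a)²` agree with
Lipschitz functions (McShane extension), so `ν` is dominated on them as well. Since
`∫ (x - a)² dν = Var_ν + (m_ν - a)²`, this gives
`Var_ν ≤ max (σ_L² + (μ_L - a)², σ_R² + (μ_R - a)²)` for every `a`, and, at `a = m_ν`,
`Var_ν ≥ min (σ_L², σ_R²)`. The laws of the two arms and all their mixtures belong to `𝒫₀`. The
laws of the arms attain every extremum except the upper variance for unequal means: there the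
upper bound at the crossing point of the two parabolas is attained by the mixture of weight
`1/2 + (σ_L² - σ_R²) / (2 (μ_L - μ_R)²)`, which lies in `[0, 1]` exactly when
`|σ_L² - σ_R²| ≤ (μ_L - μ_R)²`.
-/

open MeasureTheory ProbabilityTheory Filter Set
open scoped ENNReal NNReal

section Extremum

variable {α β : Type*} {S : Set α} {f : α → β} {a b : α}

lemma ciSup_subtype_eq_of_forall_le_of_mem [ConditionallyCompleteLattice β] {c : β}
    (hle : ∀ x ∈ S, f x ≤ c) (ha : a ∈ S) (hfa : f a = c) : ⨆ x : S, f x = c := by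
  rw [← sSup_image']
  exact IsGreatest.csSup_eq ⟨⟨a, ha, hfa⟩, forall_mem_image.2 hle⟩

lemma ciInf_subtype_eq_of_forall_le_of_mem [ConditionallyCompleteLattice β] {c : β}
    (hle : ∀ x ∈ S, c ≤ f x) (ha : a ∈ S) (hfa : f a = c) : ⨅ x : S, f x = c := by
  rw [← sInf_image']
  exact IsLeast.csInf_eq ⟨⟨a, ha, hfa⟩, forall_mem_image.2 hle⟩

lemma ciSup_subtype_eq_max [ConditionallyCompleteLinearOrder β] (ha : a ∈ S) (hb : b ∈ S)
    (hle : ∀ x ∈ S, f x ≤ max (f a) (f b)) : ⨆ x : S, f x = max (f a) (f b) := by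
  rcases max_choice (f a) (f b) with h | h
  · exact ciSup_subtype_eq_of_forall_le_of_mem hle ha h.symm
  · exact ciSup_subtype_eq_of_forall_le_of_mem hle hb h.symm

lemma ciInf_subtype_eq_min [ConditionallyCompleteLinearOrder β] (ha : a ∈ S) (hb : b ∈ S)
    (hle : ∀ x ∈ S, min (f a) (f b) ≤ f x) : ⨅ x : S, f x = min (f a) (f b) := by
  rcases min_choice (f a) (f b) with h | h
  · exact ciInf_subtype_eq_of_forall_le_of_mem hle ha h.symm
  · exact ciInf_subtype_eq_of_forall_le_of_mem hle hb h.symm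

end Extremum

lemma integral_sub_sq_eq_variance_id_add {ν : Measure ℝ} [IsProbabilityMeasure ν]
    (hν : MemLp id 2 ν) (a : ℝ) :
    ∫ x, (x - a) ^ 2 ∂ν = variance id ν + (∫ x, x ∂ν - a) ^ 2 := by
  have hνa : MemLp (fun x => id x - a) 2 ν := hν.sub (memLp_const a)
  rw [← variance_sub_const hν.aestronglyMeasurable a, variance_eq_sub hνa,
    integral_sub (hν.integrable one_le_two) (integrable_const a)]
  simp

lemma integrable_of_ae_mem_of_isCompact {α : Type*} [MeasurableSpace α] [TopologicalSpace α]
    [OpensMeasurableSpace α] [T2Space α] {ν : Measure α} [IsFiniteMeasure ν] {s : Set α}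
    (hs : IsCompact s) (hν : ∀ᵐ x ∂ν, x ∈ s) {f : α → ℝ} (hf : ContinuousOn f s) :
    Integrable f ν := by
  rw [← Measure.restrict_eq_self_of_ae_mem hν]
  exact hf.integrableOn_compact hs

lemma memLp_id_of_ae_mem_of_isCompact {ν : Measure ℝ} [IsFiniteMeasure ν] {s : Set ℝ}
    (hs : IsCompact s) (hν : ∀ᵐ x ∂ν, x ∈ s) (p : ℝ≥0∞) : MemLp id p ν := by
  obtain ⟨C, hC⟩ := hs.isBounded.exists_norm_le
  exact (memLp_top_of_bound aestronglyMeasurable_id C (hν.mono hC)).mono_exponent le_top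

section Mixture

variable {α : Type*} [MeasurableSpace α] {μ κ : Measure α} {l : ℝ}

noncomputable def MeasureTheory.Measure.mixture (l : ℝ) (μ κ : Measure α) : Measure α :=
  ENNReal.ofReal l • μ + ENNReal.ofReal (1 - l) • κ

lemma isProbabilityMeasure_mixture_s13 [IsProbabilityMeasure μ] [IsProbabilityMeasure κ]
    (hl0 : 0 ≤ l) (hl1 : l ≤ 1) : IsProbabilityMeasure (Measure.mixture l μ κ) := by
  constructor
  simp only [Measure.mixture, Measure.add_apply, Measure.smul_apply, measure_univ, smul_eq_mul,
    mul_one]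
  rw [← ENNReal.ofReal_add hl0 (sub_nonneg.2 hl1), add_sub_cancel, ENNReal.ofReal_one]

lemma integral_mixture_s13 (hl0 : 0 ≤ l) (hl1 : l ≤ 1) {f : α → ℝ} (hμ : Integrable f μ)
    (hκ : Integrable f κ) :
    ∫ x, f x ∂(Measure.mixture l μ κ) = l * ∫ x, f x ∂μ + (1 - l) * ∫ x, f x ∂κ := by
  rw [Measure.mixture, integral_add_measure (hμ.smul_measure ENNReal.ofReal_ne_top)
      (hκ.smul_measure ENNReal.ofReal_ne_top), integral_smul_measure, integral_smul_measure,
    ENNReal.toReal_ofReal hl0, ENNReal.toReal_ofReal (sub_nonneg.2 hl1), smul_eq_mul, smul_eq_mul]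

end Mixture

lemma variance_id_mixture_s13 {μ κ : Measure ℝ} [IsProbabilityMeasure μ] [IsProbabilityMeasure κ]
    {s : Set ℝ} (hs : IsCompact s) (hμ : ∀ᵐ x ∂μ, x ∈ s) (hκ : ∀ᵐ x ∂κ, x ∈ s)
    {l : ℝ} (hl0 : 0 ≤ l) (hl1 : l ≤ 1) :
    variance id (Measure.mixture l μ κ) = l * variance id μ + (1 - l) * variance id κ
      + l * (1 - l) * (∫ x, x ∂μ - ∫ x, x ∂κ) ^ 2 := by
  have hmean : ∫ x, x ∂(Measure.mixture l μ κ) = l * ∫ x, x ∂μ + (1 - l) * ∫ x, x ∂κ :=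
    integral_mixture_s13 hl0 hl1 (integrable_of_ae_mem_of_isCompact hs hμ continuousOn_id)
      (integrable_of_ae_mem_of_isCompact hs hκ continuousOn_id)
  set m := l * ∫ x, x ∂μ + (1 - l) * ∫ x, x ∂κ
  have hsq : ∀ {ρ : Measure ℝ} [IsProbabilityMeasure ρ], (∀ᵐ x ∂ρ, x ∈ s) →
      Integrable (fun x => (x - m) ^ 2) ρ := fun hρ =>
    integrable_of_ae_mem_of_isCompact hs hρ (by fun_prop)
  rw [variance_eq_integral measurable_id.aemeasurable]
  simp only [id_eq]
  rw [hmean, integral_mixture_s13 hl0 hl1 (hsq hμ) (hsq hκ),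
    integral_sub_sq_eq_variance_id_add (memLp_id_of_ae_mem_of_isCompact hs hμ 2),
    integral_sub_sq_eq_variance_id_add (memLp_id_of_ae_mem_of_isCompact hs hκ 2)]
  simp only [m]
  ring

def DominatedByMax (μ κ ν : Measure ℝ) : Prop :=
  ∀ φ : ℝ → ℝ, (∃ L : ℝ≥0, LipschitzWith L φ) →
    ∫ x, φ x ∂ν ≤ max (∫ x, φ x ∂μ) (∫ x, φ x ∂κ)

namespace DominatedByMax

variable {μ κ ν : Measure ℝ} {s : Set ℝ}

lemma left : DominatedByMax μ κ μ := fun _ _ => le_max_left _ _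

lemma right : DominatedByMax μ κ κ := fun _ _ => le_max_right _ _

lemma min_le_integral (h : DominatedByMax μ κ ν) {φ : ℝ → ℝ} {L : ℝ≥0}
    (hφ : LipschitzWith L φ) : min (∫ x, φ x ∂μ) (∫ x, φ x ∂κ) ≤ ∫ x, φ x ∂ν := by
  have h_neg := h (fun x => -φ x) ⟨L, hφ.neg⟩
  rwa [integral_neg, integral_neg, integral_neg, max_neg_neg, neg_le_neg_iff] at h_neg

lemma integral_id_le (h : DominatedByMax μ κ ν) :
    ∫ x, x ∂ν ≤ max (∫ x, x ∂μ) (∫ x, x ∂κ) :=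
  h id ⟨1, LipschitzWith.id⟩

lemma min_le_integral_id (h : DominatedByMax μ κ ν) :
    min (∫ x, x ∂μ) (∫ x, x ∂κ) ≤ ∫ x, x ∂ν :=
  h.min_le_integral LipschitzWith.id

lemma ae_mem [IsProbabilityMeasure μ] [IsFiniteMeasure ν] (h : DominatedByMax μ κ ν)
    (hs : IsClosed s) (hμ : ∀ᵐ x ∂μ, x ∈ s) (hκ : ∀ᵐ x ∂κ, x ∈ s) : ∀ᵐ x ∂ν, x ∈ s := by
  obtain ⟨x₀, hx₀⟩ := hμ.exists
  -- the distance to `s`, truncated to be integrable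
  set φ : ℝ → ℝ := fun x => min (Metric.infDist x s) 1
  have hφ : LipschitzWith 1 φ := (Metric.lipschitz_infDist_pt s).min_const 1
  have hφ_nonneg : 0 ≤ φ := fun x => le_min Metric.infDist_nonneg zero_le_one
  have hφ_zero : ∀ x ∈ s, φ x = 0 := fun x hx => by simp [φ, Metric.infDist_zero_of_mem hx]
  have hφ_int : Integrable φ ν := by
    refine Integrable.of_bound hφ.continuous.aestronglyMeasurable 1 (ae_of_all _ fun x => ?_)
    rw [Real.norm_of_nonneg (hφ_nonneg x)]
    exact min_le_right _ _
  have hφ_integral : ∫ x, φ x ∂ν = 0 := by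
    refine le_antisymm ((h φ ⟨1, hφ⟩).trans_eq ?_) (integral_nonneg hφ_nonneg)
    rw [integral_eq_zero_of_ae (hμ.mono hφ_zero), integral_eq_zero_of_ae (hκ.mono hφ_zero),
      max_self]
  filter_upwards [(integral_eq_zero_iff_of_nonneg hφ_nonneg hφ_int).1 hφ_integral] with x hx
  rw [hs.mem_iff_infDist_zero ⟨x₀, hx₀⟩]
  exact (min_eq_iff.1 hx).elim And.left fun h1 => absurd h1.1 one_ne_zero

lemma integral_le_of_locallyLipschitz (h : DominatedByMax μ κ ν) (hs : IsCompact s)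
    (hν : ∀ᵐ x ∂ν, x ∈ s) (hμ : ∀ᵐ x ∂μ, x ∈ s) (hκ : ∀ᵐ x ∂κ, x ∈ s) {f : ℝ → ℝ}
    (hf : LocallyLipschitz f) : ∫ x, f x ∂ν ≤ max (∫ x, f x ∂μ) (∫ x, f x ∂κ) := by
  obtain ⟨K, hK⟩ := hf.locallyLipschitzOn.exists_lipschitzOnWith_of_compact hs
  obtain ⟨g, hg, hfg⟩ := hK.extend_real
  have h_congr : ∀ {ρ : Measure ℝ}, (∀ᵐ x ∂ρ, x ∈ s) → ∫ x, f x ∂ρ = ∫ x, g x ∂ρ :=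
    fun hρ => integral_congr_ae (hρ.mono fun x hx => hfg hx)
  rw [h_congr hν, h_congr hμ, h_congr hκ]
  exact h g ⟨K, hg⟩

lemma min_le_integral_of_locallyLipschitz (h : DominatedByMax μ κ ν) (hs : IsCompact s)
    (hν : ∀ᵐ x ∂ν, x ∈ s) (hμ : ∀ᵐ x ∂μ, x ∈ s) (hκ : ∀ᵐ x ∂κ, x ∈ s) {f : ℝ → ℝ}
    (hf : LocallyLipschitz f) : min (∫ x, f x ∂μ) (∫ x, f x ∂κ) ≤ ∫ x, f x ∂ν := by
  have h_neg := h.integral_le_of_locallyLipschitz hs hν hμ hκ (f := fun x => -f x) hf.neg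
  rwa [integral_neg, integral_neg, integral_neg, max_neg_neg, neg_le_neg_iff] at h_neg

section Variance

variable [IsProbabilityMeasure μ] [IsProbabilityMeasure κ] [IsProbabilityMeasure ν]

lemma variance_id_le (h : DominatedByMax μ κ ν) (hs : IsCompact s) (hμ : ∀ᵐ x ∂μ, x ∈ s)
    (hκ : ∀ᵐ x ∂κ, x ∈ s) (a : ℝ) :
    variance id ν ≤ max (variance id μ + (∫ x, x ∂μ - a) ^ 2)
      (variance id κ + (∫ x, x ∂κ - a) ^ 2) := by
  have hν := h.ae_mem hs.isClosed hμ hκ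
  have h_sq : LocallyLipschitz fun x : ℝ => (x - a) ^ 2 :=
    ContDiff.locallyLipschitz (𝕂 := ℝ) (by fun_prop)
  calc variance id ν
      ≤ variance id ν + (∫ x, x ∂ν - a) ^ 2 := le_add_of_nonneg_right (sq_nonneg _)
    _ = ∫ x, (x - a) ^ 2 ∂ν :=
      (integral_sub_sq_eq_variance_id_add (memLp_id_of_ae_mem_of_isCompact hs hν 2) a).symm
    _ ≤ max (∫ x, (x - a) ^ 2 ∂μ) (∫ x, (x - a) ^ 2 ∂κ) :=
      h.integral_le_of_locallyLipschitz hs hν hμ hκ h_sq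
    _ = _ := by
      rw [integral_sub_sq_eq_variance_id_add (memLp_id_of_ae_mem_of_isCompact hs hμ 2),
        integral_sub_sq_eq_variance_id_add (memLp_id_of_ae_mem_of_isCompact hs hκ 2)]

lemma min_variance_id_le (h : DominatedByMax μ κ ν) (hs : IsCompact s) (hμ : ∀ᵐ x ∂μ, x ∈ s)
    (hκ : ∀ᵐ x ∂κ, x ∈ s) : min (variance id μ) (variance id κ) ≤ variance id ν := by
  have hν := h.ae_mem hs.isClosed hμ hκ
  set m := ∫ x, x ∂ν
  have h_sq : LocallyLipschitz fun x : ℝ => (x - m) ^ 2 :=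
    ContDiff.locallyLipschitz (𝕂 := ℝ) (by fun_prop)
  calc min (variance id μ) (variance id κ)
      ≤ min (variance id μ + (∫ x, x ∂μ - m) ^ 2) (variance id κ + (∫ x, x ∂κ - m) ^ 2) :=
        min_le_min (le_add_of_nonneg_right (sq_nonneg _)) (le_add_of_nonneg_right (sq_nonneg _))
    _ = min (∫ x, (x - m) ^ 2 ∂μ) (∫ x, (x - m) ^ 2 ∂κ) := by
      rw [integral_sub_sq_eq_variance_id_add (memLp_id_of_ae_mem_of_isCompact hs hμ 2),
        integral_sub_sq_eq_variance_id_add (memLp_id_of_ae_mem_of_isCompact hs hκ 2)]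
    _ ≤ ∫ x, (x - m) ^ 2 ∂ν := h.min_le_integral_of_locallyLipschitz hs hν hμ hκ h_sq
    _ = variance id ν := by
      rw [integral_sub_sq_eq_variance_id_add (memLp_id_of_ae_mem_of_isCompact hs hν 2), sub_self,
        sq, mul_zero, add_zero]

end Variance

end DominatedByMax

lemma dominatedByMax_mixture {μ κ : Measure ℝ} [IsFiniteMeasure μ] [IsFiniteMeasure κ]
    {s : Set ℝ} (hs : IsCompact s) (hμ : ∀ᵐ x ∂μ, x ∈ s) (hκ : ∀ᵐ x ∂κ, x ∈ s)
    {l : ℝ} (hl0 : 0 ≤ l) (hl1 : l ≤ 1) : DominatedByMax μ κ (Measure.mixture l μ κ) := by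
  rintro φ ⟨L, hφ⟩
  rw [integral_mixture_s13 hl0 hl1 (integrable_of_ae_mem_of_isCompact hs hμ hφ.continuous.continuousOn)
    (integrable_of_ae_mem_of_isCompact hs hκ hφ.continuous.continuousOn)]
  calc l * ∫ x, φ x ∂μ + (1 - l) * ∫ x, φ x ∂κ
      ≤ l * max (∫ x, φ x ∂μ) (∫ x, φ x ∂κ) + (1 - l) * max (∫ x, φ x ∂μ) (∫ x, φ x ∂κ) := by
        gcongr
        · exact le_max_left _ _
        · exact le_max_right _ _
    _ = max (∫ x, φ x ∂μ) (∫ x, φ x ∂κ) := by ring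

def dominatedLaws (μ κ : Measure ℝ) : Set (Measure ℝ) :=
  {ν | IsProbabilityMeasure ν ∧ DominatedByMax μ κ ν}

lemma left_mem_dominatedLaws {μ : Measure ℝ} [IsProbabilityMeasure μ] (κ : Measure ℝ) :
    μ ∈ dominatedLaws μ κ := ⟨‹_›, .left⟩

lemma right_mem_dominatedLaws (μ : Measure ℝ) {κ : Measure ℝ} [IsProbabilityMeasure κ] :
    κ ∈ dominatedLaws μ κ := ⟨‹_›, .right⟩

section DominatedLaws

variable {μ κ : Measure ℝ} [IsProbabilityMeasure μ] [IsProbabilityMeasure κ] {s : Set ℝ}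

lemma mixture_mem_dominatedLaws (hs : IsCompact s) (hμ : ∀ᵐ x ∂μ, x ∈ s)
    (hκ : ∀ᵐ x ∂κ, x ∈ s) {l : ℝ} (hl0 : 0 ≤ l) (hl1 : l ≤ 1) :
    Measure.mixture l μ κ ∈ dominatedLaws μ κ :=
  ⟨isProbabilityMeasure_mixture_s13 hl0 hl1, dominatedByMax_mixture hs hμ hκ hl0 hl1⟩

lemma iSup_integral_id_dominatedLaws :
    ⨆ ν : dominatedLaws μ κ, ∫ x, x ∂(ν : Measure ℝ) = max (∫ x, x ∂μ) (∫ x, x ∂κ) :=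
  ciSup_subtype_eq_max (left_mem_dominatedLaws κ) (right_mem_dominatedLaws μ)
    fun _ hν => hν.2.integral_id_le

lemma iInf_integral_id_dominatedLaws :
    ⨅ ν : dominatedLaws μ κ, ∫ x, x ∂(ν : Measure ℝ) = min (∫ x, x ∂μ) (∫ x, x ∂κ) :=
  ciInf_subtype_eq_min (f := fun ν : Measure ℝ => ∫ x, x ∂ν) (left_mem_dominatedLaws κ)
    (right_mem_dominatedLaws μ) fun _ hν => hν.2.min_le_integral_id

lemma iInf_variance_id_dominatedLaws (hs : IsCompact s) (hμ : ∀ᵐ x ∂μ, x ∈ s)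
    (hκ : ∀ᵐ x ∂κ, x ∈ s) :
    ⨅ ν : dominatedLaws μ κ, variance id (ν : Measure ℝ) = min (variance id μ) (variance id κ) :=
  ciInf_subtype_eq_min (left_mem_dominatedLaws κ) (right_mem_dominatedLaws μ)
    fun _ ⟨_, hν⟩ => hν.min_variance_id_le hs hμ hκ

lemma iSup_variance_id_dominatedLaws_of_integral_eq (hs : IsCompact s) (hμ : ∀ᵐ x ∂μ, x ∈ s)
    (hκ : ∀ᵐ x ∂κ, x ∈ s) (h_eq : ∫ x, x ∂μ = ∫ x, x ∂κ) :
    ⨆ ν : dominatedLaws μ κ, variance id (ν : Measure ℝ) = max (variance id μ) (variance id κ) :=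
  ciSup_subtype_eq_max (left_mem_dominatedLaws κ) (right_mem_dominatedLaws μ) fun _ ⟨_, hν⟩ => by
    simpa [h_eq] using hν.variance_id_le hs hμ hκ (∫ x, x ∂κ)

lemma iSup_variance_id_dominatedLaws_of_integral_ne (hs : IsCompact s) (hμ : ∀ᵐ x ∂μ, x ∈ s)
    (hκ : ∀ᵐ x ∂κ, x ∈ s) (h_ne : ∫ x, x ∂μ ≠ ∫ x, x ∂κ)
    (h_var : |variance id μ - variance id κ| ≤ (∫ x, x ∂μ - ∫ x, x ∂κ) ^ 2) :
    ⨆ ν : dominatedLaws μ κ, variance id (ν : Measure ℝ)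
      = 1 / 4 * ((∫ x, x ∂μ - ∫ x, x ∂κ) ^ 2
          + ((variance id μ - variance id κ) / (∫ x, x ∂μ - ∫ x, x ∂κ)) ^ 2)
        + (variance id μ + variance id κ) / 2 := by
  set d := ∫ x, x ∂μ - ∫ x, x ∂κ
  set δ := variance id μ - variance id κ
  have hd : d ≠ 0 := sub_ne_zero.2 h_ne
  have hd2 : 0 < d ^ 2 := by positivity
  obtain ⟨hδ_lb, hδ_ub⟩ := abs_le.1 h_var
  -- `a` is where the parabolas `a ↦ σ² + (m - a)²` of the two laws cross
  set a := (∫ x, x ∂μ + ∫ x, x ∂κ) / 2 + δ / (2 * d)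
  have ha_μ : variance id μ + (∫ x, x ∂μ - a) ^ 2 = 1 / 4 * (d ^ 2 + (δ / d) ^ 2)
      + (variance id μ + variance id κ) / 2 := by
    simp only [a, δ, d]; field_simp; ring
  have ha_κ : variance id κ + (∫ x, x ∂κ - a) ^ 2 = 1 / 4 * (d ^ 2 + (δ / d) ^ 2)
      + (variance id μ + variance id κ) / 2 := by
    simp only [a, δ, d]; field_simp; ring
  set l := (d ^ 2 + δ) / (2 * d ^ 2)
  have hl0 : 0 ≤ l := div_nonneg (by linarith) (by positivity)
  have hl1 : l ≤ 1 := (div_le_one (by positivity)).2 (by linarith)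
  refine ciSup_subtype_eq_of_forall_le_of_mem (fun _ ⟨_, hν⟩ => ?_)
    (mixture_mem_dominatedLaws hs hμ hκ hl0 hl1) ?_
  · simpa only [ha_μ, ha_κ, max_self] using hν.variance_id_le hs hμ hκ a
  · rw [variance_id_mixture_s13 hs hμ hκ hl0 hl1]
    simp only [l, δ, d]; field_simp; ring

end DominatedLaws

/-- For the two-armed bandit set
`𝒫₀ = {ν : ∫ φ dν ≤ max(E[φ(W^L)], E[φ(W^R)]) for all Lipschitz φ}`:
the upper/lower means are `μ_L ∨ μ_R` and `μ_L ∧ μ_R`, the lower variance is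
`σ_L² ∧ σ_R²`, and the upper variance is `σ_L² ∨ σ_R²` if `μ_L = μ_R`, and
`¼[(μ_L−μ_R)² + ((σ_L²−σ_R²)/(μ_L−μ_R))²] + (σ_L²+σ_R²)/2` if `μ_L ≠ μ_R`
(under `|σ_L² − σ_R²| ≤ (μ_L − μ_R)²`). -/
theorem two_armed_bandit_mean_variance
    {Ω₀ : Type*} [MeasurableSpace Ω₀] (P : Measure Ω₀) [IsProbabilityMeasure P]
    (WL WR : Ω₀ → ℝ) (hWLm : Measurable WL) (hWRm : Measurable WR)
    (hWLb : ∃ M : ℝ, ∀ ω, |WL ω| ≤ M) (hWRb : ∃ M : ℝ, ∀ ω, |WR ω| ≤ M)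
    (𝒫₀ : Set (Measure ℝ))
    (h𝒫₀ : 𝒫₀ = { ν : Measure ℝ | IsProbabilityMeasure ν ∧
      ∀ φ : ℝ → ℝ, (∃ L : ℝ≥0, LipschitzWith L φ) →
        ∫ x, φ x ∂ν ≤ max (∫ ω, φ (WL ω) ∂P) (∫ ω, φ (WR ω) ∂P) }) :
    (⨆ ν : 𝒫₀, ∫ x, x ∂(ν : Measure ℝ)) = max (∫ ω, WL ω ∂P) (∫ ω, WR ω ∂P) ∧
    (⨅ ν : 𝒫₀, ∫ x, x ∂(ν : Measure ℝ)) = min (∫ ω, WL ω ∂P) (∫ ω, WR ω ∂P) ∧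
    (⨅ ν : 𝒫₀, variance id (ν : Measure ℝ)) = min (variance WL P) (variance WR P) ∧
    ((∫ ω, WL ω ∂P) = (∫ ω, WR ω ∂P) →
      (⨆ ν : 𝒫₀, variance id (ν : Measure ℝ)) = max (variance WL P) (variance WR P)) ∧
    ((∫ ω, WL ω ∂P) ≠ (∫ ω, WR ω ∂P) →
      |variance WL P - variance WR P| ≤ ((∫ ω, WL ω ∂P) - ∫ ω, WR ω ∂P) ^ 2 →
      (⨆ ν : 𝒫₀, variance id (ν : Measure ℝ))
        = (1 / 4) * (((∫ ω, WL ω ∂P) - ∫ ω, WR ω ∂P) ^ 2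
            + ((variance WL P - variance WR P) / ((∫ ω, WL ω ∂P) - ∫ ω, WR ω ∂P)) ^ 2)
          + (variance WL P + variance WR P) / 2) := by
  obtain ⟨M, hL, hR⟩ : ∃ M, (∀ ω, WL ω ∈ Icc (-M) M) ∧ ∀ ω, WR ω ∈ Icc (-M) M := by
    obtain ⟨ML, hML⟩ := hWLb
    obtain ⟨MR, hMR⟩ := hWRb
    exact ⟨max ML MR, fun ω => abs_le.1 ((hML ω).trans (le_max_left _ _)),
      fun ω => abs_le.1 ((hMR ω).trans (le_max_right _ _))⟩
  have hμ : ∀ᵐ x ∂P.map WL, x ∈ Icc (-M) M :=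
    (ae_map_iff hWLm.aemeasurable measurableSet_Icc).2 (ae_of_all _ hL)
  have hκ : ∀ᵐ x ∂P.map WR, x ∈ Icc (-M) M :=
    (ae_map_iff hWRm.aemeasurable measurableSet_Icc).2 (ae_of_all _ hR)
  have : IsProbabilityMeasure (P.map WL) := Measure.isProbabilityMeasure_map hWLm.aemeasurable
  have : IsProbabilityMeasure (P.map WR) := Measure.isProbabilityMeasure_map hWRm.aemeasurable
  have h_laws : 𝒫₀ = dominatedLaws (P.map WL) (P.map WR) := by
    rw [h𝒫₀]
    refine ext fun ν => and_congr_right fun _ => forall₂_congr fun φ ⟨_, hφ⟩ => ?_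
    rw [integral_map hWLm.aemeasurable hφ.continuous.aestronglyMeasurable,
      integral_map hWRm.aemeasurable hφ.continuous.aestronglyMeasurable]
  have h_meanL : ∫ ω, WL ω ∂P = ∫ x, x ∂(P.map WL) :=
    (integral_map hWLm.aemeasurable aestronglyMeasurable_id).symm
  have h_meanR : ∫ ω, WR ω ∂P = ∫ x, x ∂(P.map WR) :=
    (integral_map hWRm.aemeasurable aestronglyMeasurable_id).symm
  rw [h_laws, h_meanL, h_meanR, ← variance_id_map hWLm.aemeasurable,
    ← variance_id_map hWRm.aemeasurable]
  exact ⟨iSup_integral_id_dominatedLaws, iInf_integral_id_dominatedLaws,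
    iInf_variance_id_dominatedLaws isCompact_Icc hμ hκ,
    iSup_variance_id_dominatedLaws_of_integral_eq isCompact_Icc hμ hκ,
    iSup_variance_id_dominatedLaws_of_integral_ne isCompact_Icc hμ hκ⟩
end
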